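/- If C is a finitely complete category which satisfies the triangular lemma, then for every object X of C, both the slice category Over X (= C ↓ X) and the coslice category Under X (= X ↓ C) satisfy the triangular lemma. -/

import Mathlib

open CategoryTheory CategoryTheory.Limits

universe v u v₂ u₂

variable {C : Type u} [Category.{v} C]

/-- For an internal relation represented by `r : R₀ ⟶ X ⨯ X` and morphisms
`x, y : S ⟶ X`, `x R y` means `⟨x, y⟩` factors through `r`. -/
def CategoryTheory.RelFactors [HasBinaryProducts C] {R₀ X : C} (r : R₀ ⟶ X ⨯ X)
    {S : C} (x y : S ⟶ X) : Prop :=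
  ∃ u : S ⟶ R₀, u ≫ r = prod.lift x y

/-- `r : R₀ ⟶ X ⨯ X` represents an internal equivalence relation on `X`:
it is a monomorphism and the induced relation on generalized elements is reflexive,
symmetric and transitive. -/
structure CategoryTheory.IsInternalEquivalence [HasBinaryProducts C] {R₀ X : C}
    (r : R₀ ⟶ X ⨯ X) : Prop where
  mono : Mono r
  refl : ∀ ⦃S : C⦄ (x : S ⟶ X), RelFactors r x x
  symm : ∀ ⦃S : C⦄ (x y : S ⟶ X), RelFactors r x y → RelFactors r y x
  trans : ∀ ⦃S : C⦄ (x y z : S ⟶ X),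
    RelFactors r x y → RelFactors r y z → RelFactors r x z

/-- A category with binary products satisfies the *triangular lemma* if for all internal
equivalence relations `R, S, T` on an object `X` with `R ∩ S ≤ T`, whenever
`x R y`, `y S z` and `x T z`, then `y T z`. -/
def CategoryTheory.SatisfiesTriangularLemma (C : Type u) [Category.{v} C]
    [HasBinaryProducts C] : Prop :=
  ∀ ⦃X R₀ S₀ T₀ : C⦄ (r : R₀ ⟶ X ⨯ X) (s : S₀ ⟶ X ⨯ X) (t : T₀ ⟶ X ⨯ X),
    IsInternalEquivalence r → IsInternalEquivalence s → IsInternalEquivalence t →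
    (∀ ⦃W : C⦄ (x y : W ⟶ X), RelFactors r x y → RelFactors s x y → RelFactors t x y) →
    ∀ ⦃W : C⦄ (x y z : W ⟶ X),
      RelFactors r x y → RelFactors s y z → RelFactors t x z → RelFactors t y z

/-!
The forgetful functors `Over X ⥤ C` and `Under X ⥤ C` preserve pullbacks and monomorphisms,
their product comparison maps are monomorphisms, and they lift factorizations through
monomorphisms. A functor `G : D ⥤ C` with these properties sends internal equivalence
relations on `A` to internal equivalence relations on `G A` and preserves `R ∩ S ≤ T`: the
axioms only need to be checked on generic elements (the diagonal, `r` itself, composable pairs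
of `r`-related pairs, `r ∩ s`), and those live in `D`. Applying the triangular lemma of `C` to
`G x, G y, G z` gives `G y (G T) G z`, which lifts back to `y T z`.
-/

namespace CategoryTheory

open Limits

lemma exists_lift_map_of_preservesPullback {D : Type u₂} [Category.{v₂} D] (G : D ⥤ C)
    {X Y Z : D} {f : X ⟶ Z} {g : Y ⟶ Z} [HasPullback f g] [PreservesLimit (cospan f g) G]
    {W : C} (u : W ⟶ G.obj X) (v : W ⟶ G.obj Y) (h : u ≫ G.map f = v ≫ G.map g) :
    ∃ w : W ⟶ G.obj (pullback f g),
      w ≫ G.map (pullback.fst f g) = u ∧ w ≫ G.map (pullback.snd f g) = v :=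
  let ⟨w, hw⟩ := PullbackCone.IsLimit.lift' (isLimitOfHasPullbackOfPreservesLimit G f g) u v h
  ⟨w, hw⟩

def Functor.LiftsFactorizationsThroughMonos {D : Type u₂} [Category.{v₂} D] (G : D ⥤ C) :
    Prop :=
  ∀ ⦃S B A : D⦄ (m : B ⟶ A) [Mono m] (f : S ⟶ A) (u : G.obj S ⟶ G.obj B),
    u ≫ G.map m = G.map f → ∃ v : S ⟶ B, v ≫ m = f

section Relations

variable [HasBinaryProducts C] {R₀ X : C} {r : R₀ ⟶ X ⨯ X}

variable (r) in
lemma RelFactors.self : RelFactors r (r ≫ prod.fst) (r ≫ prod.snd) :=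
  ⟨𝟙 R₀, by rw [Category.id_comp]; ext <;> simp only [prod.lift_fst, prod.lift_snd]⟩

lemma RelFactors.precomp {S T : C} {x y : S ⟶ X} (h : RelFactors r x y) (w : T ⟶ S) :
    RelFactors r (w ≫ x) (w ≫ y) := by
  obtain ⟨u, hu⟩ := h
  exact ⟨w ≫ u, by rw [Category.assoc, hu, prod.comp_lift]⟩

lemma RelFactors.exists_eq_comp {S : C} {x y : S ⟶ X} (h : RelFactors r x y) :
    ∃ u : S ⟶ R₀, x = u ≫ r ≫ prod.fst ∧ y = u ≫ r ≫ prod.snd := by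
  obtain ⟨u, hu⟩ := h
  exact ⟨u, by rw [reassoc_of% hu, prod.lift_fst], by rw [reassoc_of% hu, prod.lift_snd]⟩

end Relations

namespace Functor

variable [HasBinaryProducts C] {D : Type u₂} [Category.{v₂} D] [HasBinaryProducts D]
  (G : D ⥤ C)

lemma map_lift_comp_prodComparison {S A B : D} (f : S ⟶ A) (g : S ⟶ B) :
    G.map (prod.lift f g) ≫ prodComparison G A B = prod.lift (G.map f) (G.map g) := by
  ext <;> simp only [Category.assoc, prodComparison_fst, prodComparison_snd, ← G.map_comp,
    prod.lift_fst, prod.lift_snd]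

noncomputable def mapRel {R₀ A : D} (r : R₀ ⟶ A ⨯ A) : G.obj R₀ ⟶ G.obj A ⨯ G.obj A :=
  G.map r ≫ prodComparison G A A

variable {G}

lemma mapRel_fst {R₀ A : D} (r : R₀ ⟶ A ⨯ A) :
    G.mapRel r ≫ prod.fst = G.map (r ≫ prod.fst) := by
  rw [mapRel, Category.assoc, prodComparison_fst, G.map_comp]

lemma mapRel_snd {R₀ A : D} (r : R₀ ⟶ A ⨯ A) :
    G.mapRel r ≫ prod.snd = G.map (r ≫ prod.snd) := by
  rw [mapRel, Category.assoc, prodComparison_snd, G.map_comp]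

end Functor

section Transfer

variable [HasBinaryProducts C] {D : Type u₂} [Category.{v₂} D] [HasBinaryProducts D]
  {G : D ⥤ C} {R₀ A : D} {r : R₀ ⟶ A ⨯ A}

lemma RelFactors.map {S : D} {x y : S ⟶ A} (h : RelFactors r x y) :
    RelFactors (G.mapRel r) (G.map x) (G.map y) := by
  obtain ⟨u, hu⟩ := h
  exact ⟨G.map u, by rw [Functor.mapRel, ← G.map_comp_assoc, hu,
    Functor.map_lift_comp_prodComparison]⟩

lemma RelFactors.exists_eq_comp_map {W : C} {x y : W ⟶ G.obj A}
    (h : RelFactors (G.mapRel r) x y) :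
    ∃ u : W ⟶ G.obj R₀, x = u ≫ G.map (r ≫ prod.fst) ∧ y = u ≫ G.map (r ≫ prod.snd) := by
  obtain ⟨u, hx, hy⟩ := h.exists_eq_comp
  exact ⟨u, by rw [hx, Functor.mapRel_fst], by rw [hy, Functor.mapRel_snd]⟩

lemma RelFactors.of_map [Mono (prodComparison G A A)] (hG : G.LiftsFactorizationsThroughMonos)
    [Mono r] {S : D} {x y : S ⟶ A} (h : RelFactors (G.mapRel r) (G.map x) (G.map y)) :
    RelFactors r x y := by
  obtain ⟨u, hu⟩ := h
  rw [Functor.mapRel, ← Functor.map_lift_comp_prodComparison, ← Category.assoc,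
    cancel_mono] at hu
  exact hG r _ u hu

variable [HasPullbacks D] [PreservesLimitsOfShape WalkingCospan G]

lemma IsInternalEquivalence.map [G.PreservesMonomorphisms] [Mono (prodComparison G A A)]
    (hR : IsInternalEquivalence r) : IsInternalEquivalence (G.mapRel r) where
  mono := by
    have := hR.mono
    exact mono_comp _ _
  refl W x := by
    simpa only [G.map_id, Category.comp_id] using (hR.refl (𝟙 A)).map.precomp x
  symm W x y h := by
    obtain ⟨u, rfl, rfl⟩ := h.exists_eq_comp_map
    exact (hR.symm _ _ (RelFactors.self r)).map.precomp u
  trans W x y z hxy hyz := by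
    obtain ⟨u, rfl, hy⟩ := hxy.exists_eq_comp_map
    obtain ⟨v, hy', rfl⟩ := hyz.exists_eq_comp_map
    obtain ⟨w, rfl, rfl⟩ := exists_lift_map_of_preservesPullback G u v (hy.symm.trans hy')
    have hfst := (RelFactors.self r).precomp (pullback.fst (r ≫ prod.snd) (r ≫ prod.fst))
    have hsnd := (RelFactors.self r).precomp (pullback.snd (r ≫ prod.snd) (r ≫ prod.fst))
    rw [← Category.assoc, pullback.condition, Category.assoc] at hfst
    simpa only [Category.assoc, G.map_comp] using (hR.trans _ _ _ hfst hsnd).map.precomp w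

lemma RelFactors.mapRel_of_inf_le [Mono (prodComparison G A A)] {S₀ T₀ : D}
    {s : S₀ ⟶ A ⨯ A} {t : T₀ ⟶ A ⨯ A}
    (hI : ∀ ⦃W : D⦄ (x y : W ⟶ A), RelFactors r x y → RelFactors s x y → RelFactors t x y)
    {W : C} {x y : W ⟶ G.obj A} (hr : RelFactors (G.mapRel r) x y)
    (hs : RelFactors (G.mapRel s) x y) : RelFactors (G.mapRel t) x y := by
  obtain ⟨u, hu⟩ := hr
  obtain ⟨v, hv⟩ := hs
  have huv : u ≫ G.map r = v ≫ G.map s := by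
    rw [← cancel_mono (prodComparison G A A), Category.assoc, Category.assoc]
    exact hu.trans hv.symm
  obtain ⟨w, hwu, -⟩ := exists_lift_map_of_preservesPullback G u v huv
  have hs' :
      RelFactors s (pullback.fst r s ≫ r ≫ prod.fst) (pullback.fst r s ≫ r ≫ prod.snd) := by
    simpa only [pullback.condition_assoc] using (RelFactors.self s).precomp (pullback.snd r s)
  have ht := (hI _ _ ((RelFactors.self r).precomp (pullback.fst r s)) hs').map.precomp w
  have hx : x = u ≫ G.map (r ≫ prod.fst) := by
    rw [← Functor.mapRel_fst, reassoc_of% hu, prod.lift_fst]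
  have hy : y = u ≫ G.map (r ≫ prod.snd) := by
    rw [← Functor.mapRel_snd, reassoc_of% hu, prod.lift_snd]
  rw [hx, hy, ← hwu]
  simpa only [Category.assoc, G.map_comp] using ht

theorem SatisfiesTriangularLemma.of_functor [G.PreservesMonomorphisms]
    [∀ A : D, Mono (prodComparison G A A)] (hG : G.LiftsFactorizationsThroughMonos)
    (hC : SatisfiesTriangularLemma C) : SatisfiesTriangularLemma D := by
  intro A R₀ S₀ T₀ r s t hR hS hT hI W x y z hxy hyz hxz
  have := hT.mono
  exact RelFactors.of_map hG <| hC _ _ _ hR.map hS.map hT.map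
    (fun _ _ _ ↦ RelFactors.mapRel_of_inf_le hI) _ _ _ hxy.map hyz.map hxz.map

end Transfer

section SliceCoslice

variable {X : C}

instance Over.mono_prodComparison_forget [HasBinaryProducts C] (A B : Over X)
    [HasBinaryProduct A B] : Mono (prodComparison (Over.forget X) A B) where
  right_cancellation f g h := by
    have hp := Over.isPullback_of_binaryFan_isLimit _ (prodIsProd A B)
    have h₁ := h =≫ prod.fst
    have h₂ := h =≫ prod.snd
    simp only [Category.assoc, prodComparison_fst] at h₁
    simp only [Category.assoc, prodComparison_snd] at h₂
    exact hp.hom_ext h₁ h₂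

lemma Over.forget_liftsFactorizationsThroughMonos :
    (Over.forget X).LiftsFactorizationsThroughMonos := by
  intro S B A m _ f (u : S.left ⟶ B.left) (hu : u ≫ m.left = f.left)
  refine ⟨Over.homMk u ?_, Over.OverMorphism.ext hu⟩
  rw [← Over.w m, reassoc_of% hu, Over.w f]

lemma Under.forget_liftsFactorizationsThroughMonos [HasPullbacks C] :
    (Under.forget X).LiftsFactorizationsThroughMonos := by
  intro S B A m _ f (u : S.right ⟶ B.right) (hu : u ≫ m.right = f.right)
  refine ⟨Under.homMk u ?_, Under.UnderMorphism.ext hu⟩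
  have := Under.mono_right_of_mono m
  rw [← cancel_mono m.right, Category.assoc, hu, Under.w f, Under.w m]

end SliceCoslice

end CategoryTheory

/-- If a finitely complete category `C` satisfies the triangular lemma, then so do the
slice category `Over X` and the coslice category `Under X`, for every object `X`. -/
theorem triangular_slice_coslice [HasFiniteLimits C]
    (hC : SatisfiesTriangularLemma C) (X : C) :
    SatisfiesTriangularLemma (Over X) ∧ SatisfiesTriangularLemma (Under X) :=
  ⟨hC.of_functor Over.forget_liftsFactorizationsThroughMonos,
    hC.of_functor Under.forget_liftsFactorizationsThroughMonos⟩
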